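/- Let V₁,…,V_m be real n×n symmetric positive definite matrices and y ∈ ℝⁿ with y ≠ 0. For σ² with nonnegative entries, σ² ≠ 0, let Ω(σ²) = Σᵢ σᵢ² Vᵢ, L(σ²) = −½ ln det Ω(σ²) − ½ yᵀ Ω(σ²)⁻¹ y, and define the MM map M by (M(σ²))ᵢ = σᵢ²·√( (yᵀΩ(σ²)⁻¹VᵢΩ(σ²)⁻¹y) / tr(Ω(σ²)⁻¹Vᵢ) ), with (M(σ²))ᵢ = 0 when σᵢ² = 0. Let σ²⁽⁰⁾ have all entries strictly positive, let σ²⁽ᵗ⁺¹⁾ = M(σ²⁽ᵗ⁾), and suppose the sequence σ²⁽ᵗ⁾ converges to a limit σ²⁽∞⁾ with σ²⁽∞⁾ ≠ 0. Then σ²⁽∞⁾ is a KKT point: for each index i, if σᵢ²⁽∞⁾ > 0 then −½·tr(Ω(σ²⁽∞⁾)⁻¹Vᵢ) + ½·yᵀΩ(σ²⁽∞⁾)⁻¹VᵢΩ(σ²⁽∞⁾)⁻¹y = 0, and if σᵢ²⁽∞⁾ = 0 then −½·tr(Ω(σ²⁽∞⁾)⁻¹Vᵢ) + ½·yᵀΩ(σ²⁽∞⁾)⁻¹VᵢΩ(σ²⁽∞⁾)⁻¹y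 ≤ 0. -/

import Mathlib

/-!
Write `aᵢ = tr(Ω⁻¹Vᵢ)` and `bᵢ = yᵀΩ⁻¹VᵢΩ⁻¹y`, so that the MM update multiplies `σᵢ²` by
`√(bᵢ/aᵢ)`. While `Ω` is positive definite both are positive, so every iterate stays positive.
The limit `Ω(σ²⁽∞⁾)` is again positive definite, where the factor is continuous; passing to the
limit in the recursion gives `σᵢ² = σᵢ² √(bᵢ/aᵢ)`, so `bᵢ = aᵢ` wherever `σᵢ² > 0`. Where
`σᵢ² = 0`, a limit factor `√(bᵢ/aᵢ) > 1` would make the positive coordinate eventually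
nondecreasing, so it could not tend to `0`; hence `bᵢ ≤ aᵢ`.
-/

open Matrix

/-- The covariance matrix `Ω(σ²) = ∑ i, σᵢ² Vᵢ`. -/
noncomputable def covMat {m n : ℕ} (V : Fin m → Matrix (Fin n) (Fin n) ℝ)
    (s : Fin m → ℝ) : Matrix (Fin n) (Fin n) ℝ :=
  ∑ i, s i • V i

/-- The MM map `(M(σ²))ᵢ = σᵢ² √( (yᵀΩ⁻¹VᵢΩ⁻¹y) / tr(Ω⁻¹Vᵢ) )` (which is `0` whenever
`σᵢ² = 0`). -/
noncomputable def mmMap {m n : ℕ} (V : Fin m → Matrix (Fin n) (Fin n) ℝ)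
    (y : Fin n → ℝ) (s : Fin m → ℝ) : Fin m → ℝ := fun i =>
  s i * Real.sqrt ((y ⬝ᵥ ((covMat V s)⁻¹ * V i * (covMat V s)⁻¹) *ᵥ y) /
    ((covMat V s)⁻¹ * V i).trace)

open Filter Topology
open scoped MatrixOrder ComplexOrder

namespace Matrix.PosDef

theorem trace_mul_pos {𝕜 n : Type*} [RCLike 𝕜] [Fintype n] [Nonempty n]
    {A B : Matrix n n 𝕜} (hA : A.PosDef) (hB : B.PosDef) : 0 < (A * B).trace := by
  classical
  -- `B = C⋆C` with `C` invertible, and `tr(A C⋆C) = tr(C A C⋆)` with `C A C⋆` positive definite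
  obtain ⟨C, hC, rfl⟩ := CStarAlgebra.isStrictlyPositive_iff_eq_star_mul_self.mp
    hB.isStrictlyPositive
  have hCAC : (C * A * Cᴴ).PosDef :=
    hA.mul_mul_conjTranspose_same (vecMul_injective_iff_isUnit.mpr hC)
  rw [star_eq_conjTranspose, ← Matrix.mul_assoc, trace_mul_comm, ← Matrix.mul_assoc]
  exact hCAC.trace_pos

theorem inv_mul_mul_inv {𝕜 n : Type*} [RCLike 𝕜] [Fintype n] [DecidableEq n]
    {A B : Matrix n n 𝕜} (hA : A.PosDef) (hB : B.PosDef) : (A⁻¹ * B * A⁻¹).PosDef := by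
  simpa only [hA.inv.isHermitian.eq] using
    hB.conjTranspose_mul_mul_same (mulVec_injective_iff_isUnit.mpr hA.inv.isUnit)

end Matrix.PosDef

theorem eq_mul_of_tendsto_of_succ_eq_mul {M : Type*} [Monoid M] [TopologicalSpace M]
    [ContinuousMul M] [T2Space M] {x c : ℕ → M} {a γ : M} (hx : Tendsto x atTop (𝓝 a))
    (hc : Tendsto c atTop (𝓝 γ)) (hrec : ∀ t, x (t + 1) = x t * c t) : a = a * γ :=
  tendsto_nhds_unique (hx.comp (tendsto_add_atTop_nat 1))
    (by simpa only [Function.comp_def, hrec] using hx.mul hc)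

theorem le_one_of_tendsto_zero_of_succ_eq_mul {x c : ℕ → ℝ} {γ : ℝ} (hpos : ∀ t, 0 < x t)
    (hx : Tendsto x atTop (𝓝 0)) (hc : Tendsto c atTop (𝓝 γ))
    (hrec : ∀ t, x (t + 1) = x t * c t) : γ ≤ 1 := by
  by_contra! hγ
  obtain ⟨T, hT⟩ := eventually_atTop.mp (hc.eventually (eventually_ge_nhds hγ))
  have hmono : ∀ t ≥ T, x T ≤ x t := by
    intro t ht
    induction t, ht using Nat.le_induction with
    | base => rfl
    | succ t ht ih => rw [hrec]; nlinarith [hT t ht, hpos t]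
  exact (hpos T).not_ge (ge_of_tendsto hx (eventually_atTop.mpr ⟨T, hmono⟩))

section MM

variable {m n : ℕ} {V : Fin m → Matrix (Fin n) (Fin n) ℝ} {y : Fin n → ℝ} {s : Fin m → ℝ}

theorem covMat_posDef (hV : ∀ i, (V i).PosDef) (hs : 0 ≤ s) {j : Fin m} (hj : 0 < s j) :
    (covMat V s).PosDef := by
  rw [covMat, ← Finset.add_sum_erase _ _ (Finset.mem_univ j)]
  exact ((hV j).smul hj).add_posSemidef
    (posSemidef_sum _ fun i _ => (hV i).posSemidef.smul (hs i))

theorem continuous_covMat (V : Fin m → Matrix (Fin n) (Fin n) ℝ) : Continuous (covMat V) :=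
  continuous_finsetSum _ fun i _ => (continuous_apply i).smul continuous_const

variable (V y) in
noncomputable def mmFactor (s : Fin m → ℝ) (i : Fin m) : ℝ :=
  √((y ⬝ᵥ ((covMat V s)⁻¹ * V i * (covMat V s)⁻¹) *ᵥ y) / ((covMat V s)⁻¹ * V i).trace)

theorem mmMap_apply (i : Fin m) : mmMap V y s i = s i * mmFactor V y s i := rfl

theorem mmFactor_pos (hV : ∀ i, (V i).PosDef) (hy : y ≠ 0) (hΩ : (covMat V s).PosDef)
    (i : Fin m) : 0 < mmFactor V y s i := by
  obtain ⟨k, -⟩ := Function.ne_iff.mp hy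
  have : Nonempty (Fin n) := ⟨k⟩
  have hquad := (hΩ.inv_mul_mul_inv (hV i)).dotProduct_mulVec_pos hy
  rw [star_trivial] at hquad
  exact Real.sqrt_pos.mpr (div_pos hquad (hΩ.inv.trace_mul_pos (hV i)))

theorem mmMap_pos (hV : ∀ i, (V i).PosDef) (hy : y ≠ 0) (hs : ∀ i, 0 < s i) (i : Fin m) :
    0 < mmMap V y s i :=
  mul_pos (hs i) (mmFactor_pos hV hy (covMat_posDef hV (fun j => (hs j).le) (hs i)) i)

theorem continuousAt_mmFactor [Nonempty (Fin n)] (hV : ∀ i, (V i).PosDef)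
    (hΩ : (covMat V s).PosDef) (i : Fin m) : ContinuousAt (mmFactor V y · i) s := by
  have hinv : ContinuousAt (fun s => (covMat V s)⁻¹) s := by
    refine ContinuousAt.comp (f := covMat V) ?_ (continuous_covMat V).continuousAt
    refine continuousAt_matrix_inv _ ?_
    rw [Ring.inverse_eq_inv']
    exact continuousAt_inv₀ hΩ.det_pos.ne'
  have hquad : Continuous fun M : Matrix (Fin n) (Fin n) ℝ => y ⬝ᵥ (M * V i * M) *ᵥ y :=
    continuous_const.dotProduct
      (((continuous_id.matrix_mul continuous_const).matrix_mul continuous_id).matrix_mulVec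
        continuous_const)
  have htr : Continuous fun M : Matrix (Fin n) (Fin n) ℝ => (M * V i).trace :=
    (continuous_id.matrix_mul continuous_const).matrix_trace
  exact (ContinuousAt.comp (f := fun s => (covMat V s)⁻¹)
    (hquad.continuousAt.div htr.continuousAt (hΩ.inv.trace_mul_pos (hV i)).ne') hinv).sqrt

theorem mmFactor_eq_one_iff [Nonempty (Fin n)] (hV : ∀ i, (V i).PosDef)
    (hΩ : (covMat V s).PosDef) (i : Fin m) :
    mmFactor V y s i = 1 ↔
      -(1 / 2 : ℝ) * ((covMat V s)⁻¹ * V i).trace +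
        (1 / 2 : ℝ) * (y ⬝ᵥ ((covMat V s)⁻¹ * V i * (covMat V s)⁻¹) *ᵥ y) = 0 := by
  rw [mmFactor, Real.sqrt_eq_one, div_eq_one_iff_eq (hΩ.inv.trace_mul_pos (hV i)).ne']
  constructor <;> intro h <;> linarith

theorem mmFactor_le_one_iff [Nonempty (Fin n)] (hV : ∀ i, (V i).PosDef)
    (hΩ : (covMat V s).PosDef) (i : Fin m) :
    mmFactor V y s i ≤ 1 ↔
      -(1 / 2 : ℝ) * ((covMat V s)⁻¹ * V i).trace +
        (1 / 2 : ℝ) * (y ⬝ᵥ ((covMat V s)⁻¹ * V i * (covMat V s)⁻¹) *ᵥ y) ≤ 0 := by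
  rw [mmFactor, Real.sqrt_le_one, div_le_one (hΩ.inv.trace_mul_pos (hV i))]
  constructor <;> intro h <;> linarith

end MM

/-- if the MM iterates converge to a nonzero limit `σ²⁽∞⁾`, then the
limit is a KKT point: the partial derivative
`∂L/∂σᵢ² = −½ tr(Ω⁻¹Vᵢ) + ½ yᵀΩ⁻¹VᵢΩ⁻¹y` vanishes at coordinates with
`σᵢ²⁽∞⁾ > 0` and is nonpositive at coordinates with `σᵢ²⁽∞⁾ = 0`. -/
theorem mm_limit_is_kkt_point (m n : ℕ)
    (V : Fin m → Matrix (Fin n) (Fin n) ℝ) (hV : ∀ i, (V i).PosDef)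
    (y : Fin n → ℝ) (hy : y ≠ 0) (s : ℕ → Fin m → ℝ)
    (h0 : ∀ i, 0 < s 0 i) (hrec : ∀ t, s (t + 1) = mmMap V y (s t))
    (slim : Fin m → ℝ) (hlim : Filter.Tendsto s Filter.atTop (nhds slim))
    (hne : slim ≠ 0) :
    ∀ i, (0 < slim i →
        -(1 / 2 : ℝ) * ((covMat V slim)⁻¹ * V i).trace +
          (1 / 2 : ℝ) * (y ⬝ᵥ ((covMat V slim)⁻¹ * V i * (covMat V slim)⁻¹) *ᵥ y) = 0) ∧
      (slim i = 0 →
        -(1 / 2 : ℝ) * ((covMat V slim)⁻¹ * V i).trace +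
          (1 / 2 : ℝ) * (y ⬝ᵥ ((covMat V slim)⁻¹ * V i * (covMat V slim)⁻¹) *ᵥ y) ≤ 0) := by
  obtain ⟨k, -⟩ := Function.ne_iff.mp hy
  have : Nonempty (Fin n) := ⟨k⟩
  have hpos : ∀ t i, 0 < s t i := by
    intro t
    induction t with
    | zero => exact h0
    | succ t ih => rw [hrec]; exact mmMap_pos hV hy ih
  have hnn : 0 ≤ slim := ge_of_tendsto' hlim fun t i => (hpos t i).le
  obtain ⟨j, hj⟩ := Function.ne_iff.mp hne
  have hΩ : (covMat V slim).PosDef := covMat_posDef hV hnn ((hnn j).lt_of_ne' hj)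
  intro i
  have hsi : Tendsto (s · i) atTop (𝓝 (slim i)) := tendsto_pi_nhds.mp hlim i
  have hfac : Tendsto (fun t => mmFactor V y (s t) i) atTop (𝓝 (mmFactor V y slim i)) :=
    (continuousAt_mmFactor hV hΩ i).tendsto.comp hlim
  have hstep : ∀ t, s (t + 1) i = s t i * mmFactor V y (s t) i := fun t => by
    rw [hrec, mmMap_apply]
  refine ⟨fun hi => (mmFactor_eq_one_iff hV hΩ i).mp ?_,
    fun hi => (mmFactor_le_one_iff hV hΩ i).mp ?_⟩
  · exact (mul_eq_left₀ hi.ne').mp (eq_mul_of_tendsto_of_succ_eq_mul hsi hfac hstep).symm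
  · exact le_one_of_tendsto_zero_of_succ_eq_mul (hpos · i) (hi ▸ hsi) hfac hstep
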